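/- For n ≡ 0 (mod 3), n ≥ 3, and ℓ ≥ 1 + 8((((n/3)!)^2·p(n-1)·p(n+1)·3^{2n/3}) - 1), one has N_ℓ(n)^2 > N_ℓ(n-1)·N_ℓ(n+1), i.e., Δ_ℓ(n) > 0; in particular, for each n divisible by 3 the sequence ℓ ↦ N_ℓ(n) is log-concave at n for all sufficiently large ℓ. -/

import Mathlib

/-- `g ℓ n` is the number of (additive) subgroups of `ℤ^ℓ` of index `n`. -/
noncomputable def g (ℓ n : ℕ) : ℕ := Nat.card {H : AddSubgroup (Fin ℓ → ℤ) // H.index = n}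

/-- `N ℓ n`: coefficients of `exp (∑_{n≥1} g_ℓ(n) tⁿ/n)`, given by the equivalent
recursion `n · N_ℓ(n) = ∑_{k=1}^n g_ℓ(k) N_ℓ(n-k)`, `N_ℓ(0) = 1`. -/
noncomputable def N (ℓ : ℕ) : ℕ → ℚ
  | 0 => 1
  | n + 1 =>
    (∑ k ∈ (Finset.Icc 1 (n + 1)).attach, (g ℓ k.1 : ℚ) * N ℓ (n + 1 - k.1)) / (n + 1)
decreasing_by
  have h := Finset.mem_Icc.mp k.2; omega


/-- partition function -/
noncomputable def p (n : ℕ) : ℕ := Fintype.card (Nat.Partition n)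


/-- Maximal product of a partition (explicit closed form). -/
def W : ℕ → ℕ
  | 0 => 1
  | 1 => 1
  | 2 => 2
  | 3 => 3
  | 4 => 4
  | (m+5) => 3 * W (m+2)

theorem W_pos : ∀ m, 0 < W m
  | 0 => by norm_num [W]
  | 1 => by norm_num [W]
  | 2 => by norm_num [W]
  | 3 => by norm_num [W]
  | 4 => by norm_num [W]
  | (m+5) => by
      have := W_pos (m+2)
      simp only [W]; omega

theorem W_mono : ∀ m, W m ≤ W (m+1)
  | 0 => by norm_num [W]
  | 1 => by norm_num [W]
  | 2 => by norm_num [W]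
  | 3 => by norm_num [W]
  | 4 => by norm_num [W]
  | (m+5) => by
      have h := W_mono (m+2)
      have e1 : W (m+5) = 3 * W (m+2) := rfl
      have e2 : W (m+5+1) = 3 * W (m+2+1) := rfl
      omega

theorem two_W_le : ∀ b, 2 * W b ≤ W (b + 2)
  | 0 => by norm_num [W]
  | 1 => by norm_num [W]
  | 2 => by norm_num [W]
  | 3 => by norm_num [W]
  | 4 => by norm_num [W]
  | (b+5) => by
      have h := two_W_le (b+2)
      have e1 : W (b+5) = 3 * W (b+2) := rfl
      have e2 : W (b+5+2) = 3 * W (b+2+2) := rfl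
      omega

theorem three_W_le : ∀ b, 3 * W b ≤ W (b + 3)
  | 0 => by norm_num [W]
  | 1 => by norm_num [W]
  | 2 => by norm_num [W]
  | 3 => by norm_num [W]
  | 4 => by norm_num [W]
  | (b+5) => by
      have h := three_W_le (b+2)
      have e1 : W (b+5) = 3 * W (b+2) := rfl
      have e2 : W (b+5+3) = 3 * W (b+2+3) := rfl
      omega

theorem four_W_le : ∀ b, 4 * W b ≤ W (b + 4)
  | 0 => by norm_num [W]
  | 1 => by norm_num [W]
  | 2 => by norm_num [W]
  | 3 => by norm_num [W]
  | 4 => by norm_num [W]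
  | (b+5) => by
      have h := four_W_le (b+2)
      have e1 : W (b+5) = 3 * W (b+2) := rfl
      have e2 : W (b+5+4) = 3 * W (b+2+4) := rfl
      omega

theorem W_superadd : ∀ a b, W a * W b ≤ W (a + b)
  | 0, b => by simpa [W] using le_refl (W b)
  | 1, b => by simpa [W, Nat.add_comm] using W_mono b
  | 2, b => by simpa [W, Nat.add_comm, Nat.mul_comm] using two_W_le b
  | 3, b => by simpa [W, Nat.add_comm, Nat.mul_comm] using three_W_le b
  | 4, b => by simpa [W, Nat.add_comm, Nat.mul_comm] using four_W_le b
  | (a+5), b => by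
      have h := W_superadd (a+2) b
      have e1 : W (a+5) = 3 * W (a+2) := rfl
      have e2 : W (a+5+b) = 3 * W (a+2+b) := by
        have : a+5+b = (a+b)+2+3 := by omega
        rw [this]
        have : a+2+b = (a+b)+2 := by omega
        rw [this]
        rfl
      rw [e1, e2, Nat.mul_assoc]
      exact Nat.mul_le_mul_left 3 h

theorem le_W : ∀ k, 1 ≤ k → k ≤ W k
  | 0, h => by omega
  | 1, _ => by norm_num [W]
  | 2, _ => by norm_num [W]
  | 3, _ => by norm_num [W]
  | 4, _ => by norm_num [W]
  | (k+5), _ => by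
      have h := le_W (k+2) (by omega)
      have e1 : W (k+5) = 3 * W (k+2) := rfl
      omega

theorem W_val_2mod3 : ∀ a, W (3*a + 2) = 2 * 3^a
  | 0 => by norm_num [W]
  | (a+1) => by
      have h := W_val_2mod3 a
      have e : W (3*(a+1)+2) = 3 * W (3*a+2) := by
        have : 3*(a+1)+2 = (3*a)+5 := by omega
        rw [this]
        have : 3*a+2 = 3*a+2 := rfl
        rfl
      rw [e, h]; ring

theorem W_val_1mod3 : ∀ a, W (3*a + 4) = 4 * 3^a
  | 0 => by norm_num [W]
  | (a+1) => by
      have h := W_val_1mod3 a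
      have e : W (3*(a+1)+4) = 3 * W (3*a+4) := by
        have : 3*(a+1)+4 = (3*a+2)+5 := by omega
        rw [this]
        rfl
      rw [e, h]; ring

theorem N_zero (ℓ : ℕ) : N ℓ 0 = 1 := by rw [N]

theorem N_succ (ℓ m : ℕ) :
    N ℓ (m+1) = (∑ k ∈ Finset.Icc 1 (m+1), (g ℓ k : ℚ) * N ℓ (m + 1 - k)) / (m+1) := by
  rw [N, Finset.sum_attach (Finset.Icc 1 (m+1)) (fun k => (g ℓ k : ℚ) * N ℓ (m + 1 - k))]

theorem N_nonneg (ℓ : ℕ) : ∀ m, 0 ≤ N ℓ m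
  | 0 => by norm_num [N_zero]
  | (m+1) => by
      rw [N_succ]
      apply div_nonneg _ (by positivity)
      apply Finset.sum_nonneg
      intro k hk
      have hk' := Finset.mem_Icc.mp hk
      have := N_nonneg ℓ (m + 1 - k)
      positivity
decreasing_by omega

theorem N_succ_mul (ℓ m : ℕ) :
    (m+1 : ℚ) * N ℓ (m+1) = ∑ k ∈ Finset.Icc 1 (m+1), (g ℓ k : ℚ) * N ℓ (m + 1 - k) := by
  rw [N_succ]
  field_simp

/-- key sum identity -/
theorem sum_sq_pow_identity (M : ℕ) :
    2 * (∑ k ∈ Finset.Icc 1 M, (k:ℚ)^2 * 3^(M-k)) + ((M:ℚ)^2 + 3*M + 3) = 3^(M+1) := by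
  induction M with
  | zero => norm_num
  | succ M ih =>
      rw [Finset.sum_Icc_succ_top (by omega)]
      have e : ∀ k ∈ Finset.Icc 1 M, (k:ℚ)^2 * 3^(M+1-k) = 3 * ((k:ℚ)^2 * 3^(M-k)) := by
        intro k hk
        have hk' := (Finset.mem_Icc.mp hk).2
        have : M + 1 - k = (M - k) + 1 := by omega
        rw [this, pow_succ]
        ring
      rw [Finset.sum_congr rfl e, ← Finset.mul_sum, Nat.sub_self, pow_zero,
        show (3:ℚ)^(M+1+1) = 3*3^(M+1) by ring]
      push_cast
      linear_combination 3 * ih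

theorem sum_sq_pow_le (M : ℕ) (hM : 1 ≤ M) :
    (∑ k ∈ Finset.Icc 1 M, (k:ℚ)^2 * 3^(M-k)) ≤ (M:ℚ) * 3^M := by
  have h := sum_sq_pow_identity M
  have h3 : (0:ℚ) < 3^M := by positivity
  rcases Nat.lt_or_ge M 2 with hM2 | hM2
  · interval_cases M
    · rw [show (1:ℕ) = 0+1 from rfl, Finset.sum_Icc_succ_top (by omega)]
      norm_num
  · have hM' : (2:ℚ) ≤ M := by exact_mod_cast hM2
    have hp : (3:ℚ)^(M+1) = 3 * 3^M := by ring
    have key : (3:ℚ)*3^M ≤ 2*M*3^M := by nlinarith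
    nlinarith [h]



section Finiteness

def ρ (r k : ℕ) : (Fin r → ℤ) →+ (Fin r → ZMod k) :=
  AddMonoidHom.mk' (fun x i => (x i : ZMod k)) (by
    intro a b; funext i; push_cast; simp)

theorem ker_ρ_le {r k : ℕ} (H : AddSubgroup (Fin r → ℤ)) (hH : H.index = k) :
    (ρ r k).ker ≤ H := by
  intro x hx
  have hx' : ∀ i, (k:ℤ) ∣ x i := by
    intro i
    have : (x i : ZMod k) = 0 := congrFun hx i
    exact (ZMod.intCast_zmod_eq_zero_iff_dvd _ _).mp this
  have hxy : x = k • (fun i => x i / k) := by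
    funext i
    simp only [Pi.smul_apply, nsmul_eq_mul]
    exact (Int.mul_ediv_cancel' (hx' i)).symm
  rw [hxy, ← hH]
  exact AddSubgroup.nsmul_index_mem H _

theorem finite_subgroups (r k : ℕ) (hk : k ≠ 0) :
    Finite {H : AddSubgroup (Fin r → ℤ) // H.index = k} := by
  haveI : NeZero k := ⟨hk⟩
  haveI : Finite (AddSubgroup (Fin r → ZMod k)) :=
    Finite.of_injective (fun H : AddSubgroup (Fin r → ZMod k) => (H : Set (Fin r → ZMod k)))
      (fun _ _ h => SetLike.coe_injective h)
  apply Finite.of_injective (fun H : {H : AddSubgroup (Fin r → ℤ) // H.index = k} =>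
    H.1.map (ρ r k))
  intro H₁ H₂ h
  have e : ∀ (H : {H : AddSubgroup (Fin r → ℤ) // H.index = k}),
      AddSubgroup.comap (ρ r k) (AddSubgroup.map (ρ r k) H.1) = H.1 := by
    intro H
    rw [AddSubgroup.comap_map_eq]
    exact sup_eq_left.mpr (ker_ρ_le H.1 H.2)
  have h' := congrArg (AddSubgroup.comap (ρ r k)) h
  rw [e H₁, e H₂] at h'
  exact Subtype.ext h'

end Finiteness

section Recursion
variable (r : ℕ)

def πr : (Fin (r+1) → ℤ) →+ (Fin r → ℤ) :=
  AddMonoidHom.mk' (fun x => fun i => x i.castSucc) (fun _ _ => rfl)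

def ιr : ℤ →+ (Fin (r+1) → ℤ) := AddMonoidHom.single (fun _ => ℤ) (Fin.last r)

theorem πr_apply (x : Fin (r+1) → ℤ) (i : Fin r) : πr r x i = x i.castSucc := rfl

theorem ιr_apply (t : ℤ) : ιr r t = Pi.single (Fin.last r) t := rfl

theorem πr_surj : Function.Surjective (πr r) := by
  intro x
  refine ⟨Fin.snoc x 0, funext fun i => ?_⟩
  rw [πr_apply]
  exact Fin.snoc_castSucc _ _ _

theorem πr_ιr (t : ℤ) : πr r (ιr r t) = 0 := by
  funext i
  rw [πr_apply, ιr_apply, Pi.single_apply, if_neg (Fin.castSucc_lt_last i).ne]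
  rfl

theorem eq_ιr_of {z : Fin (r+1) → ℤ} (hz : πr r z = 0) : z = ιr r (z (Fin.last r)) := by
  funext i
  rw [ιr_apply]
  refine Fin.lastCases ?_ ?_ i
  · rw [Pi.single_eq_same]
  · intro i'
    rw [Pi.single_apply, if_neg (Fin.castSucc_lt_last i').ne]
    exact congrFun hz i'

variable (H : AddSubgroup (Fin (r+1) → ℤ))

noncomputable def aOf : ℤ := Classical.choose (Int.subgroup_cyclic (H.comap (ιr r)))

noncomputable def mOf : ℕ := (aOf r H).natAbs

theorem comap_ιr_eq : H.comap (ιr r) = AddSubgroup.zmultiples (aOf r H) := by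
  rw [AddSubgroup.zmultiples_eq_closure]
  exact Classical.choose_spec (Int.subgroup_cyclic (H.comap (ιr r)))

theorem mem_ιr_iff (t : ℤ) : ιr r t ∈ H ↔ ((mOf r H : ℤ)) ∣ t := by
  have h : ιr r t ∈ H ↔ t ∈ H.comap (ιr r) := Iff.rfl
  rw [h, comap_ιr_eq, AddSubgroup.mem_zmultiples_iff, mOf]
  constructor
  · rintro ⟨c, rfl⟩
    rw [zsmul_eq_mul]
    exact (Int.natAbs_dvd).mpr (Dvd.intro_left c rfl)
  · intro hd
    obtain ⟨c, hc⟩ := (Int.natAbs_dvd).mp hd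
    exact ⟨c, by rw [zsmul_eq_mul, hc]; push_cast; ring⟩

noncomputable def dOf : ℕ := (AddSubgroup.map (πr r) H).index

theorem mOf_mul_dOf : mOf r H * dOf r H = H.index := by
  classical
  set K := AddSubgroup.comap (πr r) (AddSubgroup.map (πr r) H) with hK
  have hle : H ≤ K := fun x hx => AddSubgroup.mem_comap.mpr (AddSubgroup.mem_map_of_mem _ hx)
  have h1 : K.index = dOf r H := AddSubgroup.index_comap_of_surjective _ (πr_surj r)
  have h2 := AddSubgroup.relIndex_mul_index hle
  -- build ψ : ℤ →+ ↥K ⧸ (H.addSubgroupOf K)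
  have hmem : ∀ t : ℤ, ιr r t ∈ K := by
    intro t
    apply AddSubgroup.mem_comap.mpr
    rw [πr_ιr]
    exact zero_mem _
  let ι' : ℤ →+ ↥K := (ιr r).codRestrict K hmem
  let ψ : ℤ →+ ↥K ⧸ (H.addSubgroupOf K) := (QuotientAddGroup.mk' (H.addSubgroupOf K)).comp ι'
  have hψs : Function.Surjective ψ := by
    intro q
    induction q using QuotientAddGroup.induction_on with
    | H y =>
      obtain ⟨y, hy⟩ := y
      have hy' : πr r y ∈ AddSubgroup.map (πr r) H := AddSubgroup.mem_comap.mp hy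
      obtain ⟨x₀, hx₀, hπ⟩ := hy'
      refine ⟨(y - x₀) (Fin.last r), ?_⟩
      show QuotientAddGroup.mk' (H.addSubgroupOf K) (ι' _) =
        QuotientAddGroup.mk' (H.addSubgroupOf K) ⟨y, hy⟩
      rw [QuotientAddGroup.mk'_eq_mk']
      have hy0 : πr r (y - x₀) = 0 := by rw [map_sub, hπ, sub_self]
      have hsub : y - x₀ = ιr r ((y - x₀) (Fin.last r)) := eq_ιr_of r hy0
      refine ⟨⟨x₀, hle hx₀⟩, ?_, ?_⟩
      · rw [AddSubgroup.mem_addSubgroupOf]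
        exact hx₀
      · apply Subtype.ext
        show ιr r ((y - x₀) (Fin.last r)) + x₀ = y
        rw [← hsub]; ring
  have hψker : ψ.ker = H.comap (ιr r) := by
    ext t
    show ((ι' t : ↥K) : ↥K ⧸ (H.addSubgroupOf K)) = 0 ↔ _
    rw [QuotientAddGroup.eq_zero_iff]
    show (ι' t : ↥K) ∈ H.addSubgroupOf K ↔ _
    rw [AddSubgroup.mem_addSubgroupOf]
    rfl
  have h3 : H.relIndex K = mOf r H := by
    have e0 : H.relIndex K = (H.addSubgroupOf K).index := rfl
    have e1 : (H.addSubgroupOf K).index = Nat.card (↥K ⧸ H.addSubgroupOf K) :=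
      AddSubgroup.index_eq_card _
    have e2 : Nat.card (↥K ⧸ H.addSubgroupOf K) = Nat.card (ℤ ⧸ ψ.ker) :=
      (Nat.card_congr (QuotientAddGroup.quotientKerEquivOfSurjective ψ hψs).toEquiv).symm
    have e3 : Nat.card (ℤ ⧸ ψ.ker) = ψ.ker.index := (AddSubgroup.index_eq_card _).symm
    have e4 : ψ.ker.index = mOf r H := by
      rw [hψker, comap_ιr_eq, Int.index_zmultiples]
      rfl
    rw [e0, e1, e2, e3, e4]
  rw [h3, h1] at h2
  exact h2


/-- `R H x t` : `t` is a valid last coordinate over `x` for `H`, mod `mOf`. -/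
def R (x : Fin r → ℤ) (t : ℤ) : Prop :=
  ∃ y, y ∈ H ∧ πr r y = x ∧ ((mOf r H : ℤ) ∣ t - y (Fin.last r))

theorem R_exists {x : Fin r → ℤ} (hx : x ∈ H.map (πr r)) : ∃ t, R r H x t := by
  obtain ⟨y, hy, hπ⟩ := hx
  exact ⟨y (Fin.last r), y, hy, hπ, by simp⟩

theorem R_self {z : Fin (r+1) → ℤ} (hz : z ∈ H) : R r H (πr r z) (z (Fin.last r)) :=
  ⟨z, hz, rfl, by simp⟩

theorem R_dvd_diff {x : Fin r → ℤ} {t t' : ℤ} (h : R r H x t) (h' : R r H x t') :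
    (mOf r H : ℤ) ∣ t - t' := by
  obtain ⟨y, hy, hπ, hd⟩ := h
  obtain ⟨y', hy', hπ', hd'⟩ := h'
  have hmem : y - y' ∈ H := sub_mem hy hy'
  have h0 : πr r (y - y') = 0 := by rw [map_sub, hπ, hπ', sub_self]
  have := (mem_ιr_iff r H ((y - y') (Fin.last r))).mp (by rw [← eq_ιr_of r h0]; exact hmem)
  have hyy : (y - y') (Fin.last r) = y (Fin.last r) - y' (Fin.last r) := rfl
  rw [hyy] at this
  have h4 : (mOf r H : ℤ) ∣ (t - y (Fin.last r)) - (t' - y' (Fin.last r))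
      + (y (Fin.last r) - y' (Fin.last r)) := dvd_add (dvd_sub hd hd') this
  have e : (t - y (Fin.last r)) - (t' - y' (Fin.last r))
      + (y (Fin.last r) - y' (Fin.last r)) = t - t' := by ring
  rwa [e] at h4

theorem R_shift {x : Fin r → ℤ} {t t' : ℤ} (h : R r H x t) (hd : (mOf r H : ℤ) ∣ t' - t) :
    R r H x t' := by
  obtain ⟨y, hy, hπ, hdy⟩ := h
  exact ⟨y, hy, hπ, by simpa using dvd_add hd hdy⟩

theorem R_zero : R r H 0 0 := ⟨0, zero_mem _, map_zero _, by simp⟩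

theorem R_add {x x' : Fin r → ℤ} {t t' : ℤ} (h : R r H x t) (h' : R r H x' t') :
    R r H (x + x') (t + t') := by
  obtain ⟨y, hy, hπ, hd⟩ := h
  obtain ⟨y', hy', hπ', hd'⟩ := h'
  refine ⟨y + y', add_mem hy hy', by rw [map_add, hπ, hπ'], ?_⟩
  have : (t + t') - (y + y') (Fin.last r) = (t - y (Fin.last r)) + (t' - y' (Fin.last r)) := by
    show (t + t') - (y (Fin.last r) + y' (Fin.last r)) = _
    ring
  rw [this]
  exact dvd_add hd hd'

theorem R_zsmul {x : Fin r → ℤ} {t : ℤ} (h : R r H x t) (c : ℤ) : R r H (c • x) (c * t) := by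
  obtain ⟨y, hy, hπ, hd⟩ := h
  refine ⟨c • y, zsmul_mem hy c, by rw [map_zsmul, hπ], ?_⟩
  have : c * t - (c • y) (Fin.last r) = c * (t - y (Fin.last r)) := by
    show c * t - c • (y (Fin.last r)) = _
    rw [zsmul_eq_mul]
    push_cast
    ring
  rw [this]
  exact Dvd.dvd.mul_left hd c

theorem R_sum {α : Type*} (s : Finset α) (f : α → Fin r → ℤ) (t : α → ℤ)
    (h : ∀ a ∈ s, R r H (f a) (t a)) : R r H (∑ a ∈ s, f a) (∑ a ∈ s, t a) := by
  classical
  induction s using Finset.induction_on with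
  | empty => simpa using R_zero r H
  | @insert a s' hni ih =>
      rw [Finset.sum_insert hni, Finset.sum_insert hni]
      exact R_add r H (h a (Finset.mem_insert_self a s'))
        (ih (fun b hb => h b (Finset.mem_insert_of_mem hb)))

theorem mem_iff_R (z : Fin (r+1) → ℤ) :
    z ∈ H ↔ πr r z ∈ H.map (πr r) ∧ R r H (πr r z) (z (Fin.last r)) := by
  constructor
  · intro hz
    exact ⟨AddSubgroup.mem_map_of_mem _ hz, R_self r H hz⟩
  · rintro ⟨_, y, hy, hπ, hd⟩
    have h0 : πr r (z - y) = 0 := by rw [map_sub, hπ, sub_self]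
    have hzy : (z - y) (Fin.last r) = z (Fin.last r) - y (Fin.last r) := rfl
    have : ιr r (z (Fin.last r) - y (Fin.last r)) ∈ H := (mem_ιr_iff r H _).mpr hd
    have hz : z = y + ιr r (z (Fin.last r) - y (Fin.last r)) := by
      rw [← hzy, ← eq_ιr_of r h0]; ring
    rw [hz]
    exact add_mem hy this

end Recursion

section BasisStuff
variable (r : ℕ)

theorem mem_toIntSubmodule_iff (S : AddSubgroup (Fin r → ℤ)) (x : Fin r → ℤ) :
    x ∈ AddSubgroup.toIntSubmodule S ↔ x ∈ S := Iff.rfl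

noncomputable def basOf (H' : AddSubgroup (Fin r → ℤ)) :
    Σ n, Module.Basis (Fin n) ℤ ↥(AddSubgroup.toIntSubmodule H') :=
  Submodule.basisOfPid (Pi.basisFun ℤ (Fin r)) _

theorem basOf_le (H' : AddSubgroup (Fin r → ℤ)) : (basOf r H').1 ≤ r := by
  have h1 : Module.finrank ℤ ↥(AddSubgroup.toIntSubmodule H') = (basOf r H').1 := by
    rw [Module.finrank_eq_card_basis (basOf r H').2, Fintype.card_fin]
  have h2 := Submodule.finrank_le (AddSubgroup.toIntSubmodule H')
  rw [Module.finrank_fin_fun] at h2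
  omega

end BasisStuff


section Encoding
variable (r : ℕ) (H : AddSubgroup (Fin (r+1) → ℤ))

theorem bas_mem (H' : AddSubgroup (Fin r → ℤ)) (j : Fin (basOf r H').1) :
    ((basOf r H').2 j : Fin r → ℤ) ∈ H' :=
  (mem_toIntSubmodule_iff r H' _).mp ((basOf r H').2 j).2

noncomputable def vecZ : Fin ((basOf r (H.map (πr r))).1) → ℤ :=
  fun j => Classical.choose
    (R_exists r H (AddSubgroup.mem_map.mpr
      (by
        have := bas_mem r (H.map (πr r)) j
        obtain ⟨y, hy, hπ⟩ := this
        exact ⟨y, hy, hπ⟩)))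

theorem vecZ_spec (j : Fin ((basOf r (H.map (πr r))).1)) :
    R r H ((basOf r (H.map (πr r))).2 j : Fin r → ℤ) (vecZ r H j) :=
  Classical.choose_spec _

noncomputable def vec : Fin r → ZMod (mOf r H) :=
  fun i => if h : (i : ℕ) < (basOf r (H.map (πr r))).1
    then ((vecZ r H ⟨i, h⟩ : ℤ) : ZMod (mOf r H)) else 0

theorem vec_castLE (j : Fin ((basOf r (H.map (πr r))).1)) :
    vec r H (Fin.castLE (basOf_le r (H.map (πr r))) j)
      = ((vecZ r H j : ℤ) : ZMod (mOf r H)) := by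
  have hlt : ((Fin.castLE (basOf_le r (H.map (πr r))) j : Fin r) : ℕ)
      < (basOf r (H.map (πr r))).1 := by
    simpa using j.2
  rw [vec, dif_pos hlt]
  congr 1

theorem R_repr {x : Fin r → ℤ} (hx : x ∈ AddSubgroup.toIntSubmodule (H.map (πr r))) :
    R r H x (∑ j, ((basOf r (H.map (πr r))).2.repr ⟨x, hx⟩ j) * vecZ r H j) := by
  classical
  set H' := H.map (πr r)
  set b := (basOf r H').2
  set u : ↥(AddSubgroup.toIntSubmodule H') := ⟨x, hx⟩
  have hu : (∑ j, b.repr u j • b j) = u := Module.Basis.sum_repr b u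
  have hx2 : x = ∑ j, (b.repr u j) • (b j : Fin r → ℤ) := by
    have h := congrArg (fun v : ↥(AddSubgroup.toIntSubmodule H') => (v : Fin r → ℤ)) hu
    simp only [Submodule.coe_sum, Submodule.coe_smul] at h
    exact h.symm
  rw [hx2]
  exact R_sum r H Finset.univ _ _ (fun j _ => R_zsmul r H (vecZ_spec r H j) _)

/-- characterization predicate: depends on `H` only through `(H', m, vall)` -/
def P (H' : AddSubgroup (Fin r → ℤ)) (m : ℕ) (vall : Fin r → ℕ) (z : Fin (r+1) → ℤ) : Prop :=
  ∃ h : πr r z ∈ H', (m : ℤ) ∣ (z (Fin.last r) -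
    ∑ j, ((basOf r H').2.repr ⟨πr r z, (mem_toIntSubmodule_iff r H' _).mpr h⟩ j)
      * ((vall (Fin.castLE (basOf_le r H') j) : ℕ) : ℤ))

theorem dvd_sub_valcast {m : ℕ} (hm : m ≠ 0) (t : ℤ) :
    (m : ℤ) ∣ t - (((t : ZMod m)).val : ℤ) := by
  haveI : NeZero m := ⟨hm⟩
  rw [ZMod.val_intCast]
  exact ⟨t / m, by rw [Int.emod_def]; ring⟩

theorem mem_iff_P (hm : mOf r H ≠ 0) (z : Fin (r+1) → ℤ) :
    z ∈ H ↔ P r (H.map (πr r)) (mOf r H) (fun i => (vec r H i).val) z := by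
  classical
  set H' := H.map (πr r) with hH'
  have hdiff : ∀ (h : πr r z ∈ H'),
      (mOf r H : ℤ) ∣
        (∑ j, ((basOf r H').2.repr ⟨πr r z, (mem_toIntSubmodule_iff r H' _).mpr h⟩ j)
            * vecZ r H j)
        - ∑ j, ((basOf r H').2.repr ⟨πr r z, (mem_toIntSubmodule_iff r H' _).mpr h⟩ j)
            * (((vec r H (Fin.castLE (basOf_le r H') j)).val : ℕ) : ℤ) := by
    intro h
    rw [← Finset.sum_sub_distrib]
    apply Finset.dvd_sum
    intro j _
    have e : ((basOf r H').2.repr ⟨πr r z, (mem_toIntSubmodule_iff r H' _).mpr h⟩ j) * vecZ r H j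
        - ((basOf r H').2.repr ⟨πr r z, (mem_toIntSubmodule_iff r H' _).mpr h⟩ j)
          * (((vec r H (Fin.castLE (basOf_le r H') j)).val : ℕ) : ℤ)
        = ((basOf r H').2.repr ⟨πr r z, (mem_toIntSubmodule_iff r H' _).mpr h⟩ j)
          * (vecZ r H j - (((vec r H (Fin.castLE (basOf_le r H') j)).val : ℕ) : ℤ)) := by ring
    rw [e]
    apply Dvd.dvd.mul_left
    rw [vec_castLE]
    exact dvd_sub_valcast hm _
  constructor
  · intro hz
    have h1 : πr r z ∈ H' := AddSubgroup.mem_map_of_mem _ hz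
    refine ⟨h1, ?_⟩
    have hR1 := R_self r H hz
    have hR2 := R_repr r H ((mem_toIntSubmodule_iff r H' _).mpr h1)
    have d1 := R_dvd_diff r H hR1 hR2
    have := dvd_add d1 (hdiff h1)
    have e : (z (Fin.last r)
          - ∑ j, ((basOf r H').2.repr ⟨πr r z, (mem_toIntSubmodule_iff r H' _).mpr h1⟩ j)
            * vecZ r H j)
        + ((∑ j, ((basOf r H').2.repr ⟨πr r z, (mem_toIntSubmodule_iff r H' _).mpr h1⟩ j)
            * vecZ r H j)
          - ∑ j, ((basOf r H').2.repr ⟨πr r z, (mem_toIntSubmodule_iff r H' _).mpr h1⟩ j)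
            * (((vec r H (Fin.castLE (basOf_le r H') j)).val : ℕ) : ℤ))
        = z (Fin.last r)
          - ∑ j, ((basOf r H').2.repr ⟨πr r z, (mem_toIntSubmodule_iff r H' _).mpr h1⟩ j)
            * (((vec r H (Fin.castLE (basOf_le r H') j)).val : ℕ) : ℤ) := by ring
    rwa [e] at this
  · rintro ⟨h1, hdvd⟩
    have hR2 := R_repr r H ((mem_toIntSubmodule_iff r H' _).mpr h1)
    have hshift : (mOf r H : ℤ) ∣ z (Fin.last r)
        - ∑ j, ((basOf r H').2.repr ⟨πr r z, (mem_toIntSubmodule_iff r H' _).mpr h1⟩ j)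
            * vecZ r H j := by
      have := dvd_sub hdvd (hdiff h1)
      have e : (z (Fin.last r)
            - ∑ j, ((basOf r H').2.repr ⟨πr r z, (mem_toIntSubmodule_iff r H' _).mpr h1⟩ j)
              * (((vec r H (Fin.castLE (basOf_le r H') j)).val : ℕ) : ℤ))
          - ((∑ j, ((basOf r H').2.repr ⟨πr r z, (mem_toIntSubmodule_iff r H' _).mpr h1⟩ j)
              * vecZ r H j)
            - ∑ j, ((basOf r H').2.repr ⟨πr r z, (mem_toIntSubmodule_iff r H' _).mpr h1⟩ j)
              * (((vec r H (Fin.castLE (basOf_le r H') j)).val : ℕ) : ℤ))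
          = z (Fin.last r)
            - ∑ j, ((basOf r H').2.repr ⟨πr r z, (mem_toIntSubmodule_iff r H' _).mpr h1⟩ j)
              * vecZ r H j := by ring
      rwa [e] at this
    have hR := R_shift r H hR2 hshift
    exact (mem_iff_R r H z).mpr ⟨h1, hR⟩

end Encoding

section Counting

theorem mOf_ne_zero {r k : ℕ} (hk : k ≠ 0) (H : AddSubgroup (Fin (r+1) → ℤ))
    (hH : H.index = k) : mOf r H ≠ 0 := by
  intro h0
  apply hk
  rw [← hH, ← mOf_mul_dOf r H, h0, zero_mul]

theorem dOf_ne_zero {r k : ℕ} (hk : k ≠ 0) (H : AddSubgroup (Fin (r+1) → ℤ))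
    (hH : H.index = k) : dOf r H ≠ 0 := by
  intro h0
  apply hk
  rw [← hH, ← mOf_mul_dOf r H, h0, mul_zero]

theorem g_succ_le (r k : ℕ) (hk : k ≠ 0) :
    g (r+1) k ≤ ∑ dm ∈ Nat.divisorsAntidiagonal k, g r dm.1 * dm.2 ^ r := by
  classical
  haveI hfin : ∀ dm : {x : ℕ × ℕ // x ∈ Nat.divisorsAntidiagonal k},
      Finite ({H' : AddSubgroup (Fin r → ℤ) // H'.index = dm.1.1} × (Fin r → ZMod dm.1.2)) := by
    intro dm
    haveI := finite_subgroups r dm.1.1 (Nat.left_ne_zero_of_mem_divisorsAntidiagonal dm.2)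
    haveI : NeZero dm.1.2 := ⟨Nat.right_ne_zero_of_mem_divisorsAntidiagonal dm.2⟩
    infer_instance
  set T := Σ dm : {x : ℕ × ℕ // x ∈ Nat.divisorsAntidiagonal k},
      ({H' : AddSubgroup (Fin r → ℤ) // H'.index = dm.1.1} × (Fin r → ZMod dm.1.2)) with hT
  haveI : Finite T := by infer_instance
  -- the encoding map
  have hmem : ∀ H : {H : AddSubgroup (Fin (r+1) → ℤ) // H.index = k},
      (dOf r H.1, mOf r H.1) ∈ Nat.divisorsAntidiagonal k := by
    intro H
    rw [Nat.mem_divisorsAntidiagonal]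
    exact ⟨by rw [mul_comm]; rw [mOf_mul_dOf r H.1, H.2], hk⟩
  set Φ : {H : AddSubgroup (Fin (r+1) → ℤ) // H.index = k} → T :=
    fun H => ⟨⟨(dOf r H.1, mOf r H.1), hmem H⟩, ⟨⟨H.1.map (πr r), rfl⟩, vec r H.1⟩⟩ with hΦ
  have hinj : Function.Injective Φ := by
    intro H₁ H₂ h
    have h1 : H₁.1.map (πr r) = H₂.1.map (πr r) := congrArg (fun x : T => x.2.1.1) h
    have h2 : mOf r H₁.1 = mOf r H₂.1 := congrArg (fun x : T => x.1.1.2) h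
    have h3 : (fun i => (vec r H₁.1 i).val) = (fun i => (vec r H₂.1 i).val) :=
      congrArg (fun x : T => fun i => (x.2.2 i).val) h
    have hm₁ := mOf_ne_zero hk H₁.1 H₁.2
    have hm₂ := mOf_ne_zero hk H₂.1 H₂.2
    apply Subtype.ext
    ext z
    rw [mem_iff_P r H₁.1 hm₁ z, mem_iff_P r H₂.1 hm₂ z, h1, h3, h2]
  have hcard := Nat.card_le_card_of_injective Φ hinj
  -- compute the card of T
  haveI : ∀ dm : {x : ℕ × ℕ // x ∈ Nat.divisorsAntidiagonal k},
      Fintype ({H' : AddSubgroup (Fin r → ℤ) // H'.index = dm.1.1} × (Fin r → ZMod dm.1.2)) :=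
    fun dm => Fintype.ofFinite _
  have hTcard : Nat.card T = ∑ dm ∈ Nat.divisorsAntidiagonal k, g r dm.1 * dm.2 ^ r := by
    rw [Nat.card_eq_fintype_card]
    rw [Fintype.card_sigma]
    rw [← Finset.sum_coe_sort (Nat.divisorsAntidiagonal k) (fun dm => g r dm.1 * dm.2 ^ r)]
    apply Finset.sum_congr rfl
    intro dm _
    haveI := finite_subgroups r dm.1.1 (Nat.left_ne_zero_of_mem_divisorsAntidiagonal dm.2)
    haveI : NeZero dm.1.2 := ⟨Nat.right_ne_zero_of_mem_divisorsAntidiagonal dm.2⟩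
    rw [← Nat.card_eq_fintype_card, Nat.card_prod, Nat.card_pi]
    have h5 : ∏ _i : Fin r, Nat.card (ZMod (dm.1.2)) = dm.1.2 ^ r := by
      simp [Nat.card_zmod]
    rw [h5]
    rfl
  rw [← hTcard]
  exact hcard

theorem g_le : ∀ (ℓ : ℕ) (k : ℕ), k ≠ 0 → g ℓ k ≤ k ^ (ℓ + 1) := by
  intro ℓ
  induction ℓ with
  | zero =>
      intro k hk
      haveI : Subsingleton (AddSubgroup (Fin 0 → ℤ)) := by
        constructor
        intro a b
        ext z
        have hz : z = 0 := funext fun i => i.elim0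
        subst hz
        exact iff_of_true (zero_mem a) (zero_mem b)
      have h1 : g 0 k ≤ 1 := by
        have h2 := Nat.card_le_card_of_injective
          (fun _ : {H : AddSubgroup (Fin 0 → ℤ) // H.index = k} => (() : Unit))
          (fun a b _ => Subsingleton.elim a b)
        calc g 0 k = Nat.card {H : AddSubgroup (Fin 0 → ℤ) // H.index = k} := rfl
          _ ≤ Nat.card Unit := h2
          _ = 1 := Nat.card_unique
      calc g 0 k ≤ 1 := h1
        _ ≤ k ^ (0+1) := by
            have : 1 ≤ k := Nat.one_le_iff_ne_zero.mpr hk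
            simpa using this
  | succ r ih =>
      intro k hk
      refine (g_succ_le r k hk).trans ?_
      have hterm : ∀ dm ∈ Nat.divisorsAntidiagonal k, g r dm.1 * dm.2 ^ r ≤ dm.1 * k ^ r := by
        intro dm hdm
        obtain ⟨hmul, -⟩ := Nat.mem_divisorsAntidiagonal.mp hdm
        have hd0 : dm.1 ≠ 0 := Nat.left_ne_zero_of_mem_divisorsAntidiagonal hdm
        calc g r dm.1 * dm.2 ^ r ≤ dm.1 ^ (r+1) * dm.2 ^ r :=
              Nat.mul_le_mul_right _ (ih dm.1 hd0)
          _ = dm.1 * (dm.1 * dm.2) ^ r := by rw [pow_succ, mul_pow]; ring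
          _ = dm.1 * k ^ r := by rw [hmul]
      refine (Finset.sum_le_sum hterm).trans ?_
      rw [← Finset.sum_mul]
      have hsum : ∑ dm ∈ Nat.divisorsAntidiagonal k, dm.1 ≤ k * k := by
        have hle : ∀ dm ∈ Nat.divisorsAntidiagonal k, dm.1 ≤ k := by
          intro dm hdm
          obtain ⟨hmul, -⟩ := Nat.mem_divisorsAntidiagonal.mp hdm
          exact Nat.le_of_dvd (Nat.pos_of_ne_zero hk) ⟨dm.2, hmul.symm⟩
        calc ∑ dm ∈ Nat.divisorsAntidiagonal k, dm.1
            ≤ ∑ _dm ∈ Nat.divisorsAntidiagonal k, k := Finset.sum_le_sum hle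
          _ = (Nat.divisorsAntidiagonal k).card * k := by rw [Finset.sum_const, smul_eq_mul]
          _ ≤ k * k := by
              apply Nat.mul_le_mul_right
              have hcard2 : (Nat.divisorsAntidiagonal k).card ≤ (Finset.Icc 1 k).card := by
                apply Finset.card_le_card_of_injOn (fun dm => dm.1)
                · intro dm hdm
                  obtain ⟨hmul, -⟩ := Nat.mem_divisorsAntidiagonal.mp hdm
                  have h1 : dm.1 ≠ 0 := Nat.left_ne_zero_of_mem_divisorsAntidiagonal hdm
                  have hd1 : dm.1 ≤ k := Nat.le_of_dvd (Nat.pos_of_ne_zero hk) ⟨dm.2, hmul.symm⟩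
                  simp only [Finset.mem_coe, Finset.mem_Icc]
                  omega
                · intro a ha b hb hab
                  simp only at hab
                  obtain ⟨hma, -⟩ := Nat.mem_divisorsAntidiagonal.mp ha
                  obtain ⟨hmb, -⟩ := Nat.mem_divisorsAntidiagonal.mp hb
                  have h1 : a.1 ≠ 0 := Nat.left_ne_zero_of_mem_divisorsAntidiagonal ha
                  have h2 : a.2 = b.2 := by
                    apply Nat.eq_of_mul_eq_mul_left (Nat.pos_of_ne_zero h1)
                    rw [hma, hab, hmb]
                  exact Prod.ext hab h2
              simpa using hcard2
      calc (∑ dm ∈ Nat.divisorsAntidiagonal k, dm.1) * k ^ r ≤ (k*k) * k^r :=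
            Nat.mul_le_mul_right _ hsum
        _ = k ^ (r+1+1) := by ring

end Counting

open Finset

section Glower
variable {r : ℕ}


/-- the functional attached to `v` -/
def φ (v : Fin r → ZMod 3) : (Fin (r+1) → ℤ) →+ ZMod 3 :=
  AddMonoidHom.mk' (fun x => ∑ j, (x j : ZMod 3) * (Fin.snoc v 1 : Fin (r+1) → ZMod 3) j) (by
    intro a b
    rw [← Finset.sum_add_distrib]
    apply Finset.sum_congr rfl
    intro j _
    simp only [Pi.add_apply, Int.cast_add]
    ring)

theorem φ_single (v : Fin r → ZMod 3) (j₀ : Fin (r+1)) (t : ℤ) :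
    φ v (Pi.single j₀ t) = (t : ZMod 3) * (Fin.snoc v 1 : Fin (r+1) → ZMod 3) j₀ := by
  show (∑ j, ((Pi.single j₀ t : Fin (r+1) → ℤ) j : ZMod 3) * _) = _
  rw [Finset.sum_eq_single j₀ (fun b _ hb => by simp [Pi.single_apply, hb])
    (fun h => absurd (Finset.mem_univ j₀) h)]
  simp
theorem φ_surj (v : Fin r → ZMod 3) : Function.Surjective (φ v) := by
  intro z
  refine ⟨Pi.single (Fin.last r) (z.val : ℤ), ?_⟩
  rw [φ_single]
  simp [Fin.snoc_last, ZMod.natCast_val]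

theorem φ_ker_index (v : Fin r → ZMod 3) : (φ v).ker.index = 3 := by
  rw [AddSubgroup.index_ker]
  rw [AddMonoidHom.range_eq_top_of_surjective _ (φ_surj v)]
  rw [Nat.card_congr AddSubgroup.topEquiv.toEquiv, Nat.card_zmod]

theorem g_lower (r : ℕ) : 3^r ≤ g (r+1) 3 := by
  haveI : Finite {H : AddSubgroup (Fin (r+1) → ℤ) // H.index = 3} :=
    finite_subgroups (r+1) 3 (by norm_num)
  have hinj : Function.Injective (fun v : Fin r → ZMod 3 =>
      (⟨(φ v).ker, φ_ker_index v⟩ : {H : AddSubgroup (Fin (r+1) → ℤ) // H.index = 3})) := by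
    intro v w h
    have hker : (φ v).ker = (φ w).ker := congrArg Subtype.val h
    funext i
    set x : Fin (r+1) → ℤ := Pi.single (Fin.castSucc i) 1 + Pi.single (Fin.last r) (-((v i).val : ℤ)) with hx
    have hv : φ v x = 0 := by
      rw [map_add, φ_single, φ_single]
      simp [Fin.snoc_castSucc, Fin.snoc_last, ZMod.natCast_val]
    have hw : φ w x = 0 := by
      have : x ∈ (φ v).ker := hv
      rw [hker] at this
      exact this
    rw [map_add, φ_single, φ_single] at hw
    simp [Fin.snoc_castSucc, Fin.snoc_last, ZMod.natCast_val] at hw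
    linear_combination -hw
  have := Nat.card_le_card_of_injective _ hinj
  calc 3^r = Nat.card (Fin r → ZMod 3) := by
        rw [Nat.card_pi]
        simp [Nat.card_zmod]
    _ ≤ _ := this

end Glower

theorem N_upper (ℓ : ℕ) (hℓ : 1 ≤ ℓ) : ∀ m, N ℓ m ≤ (3:ℚ)^m * ((W m : ℚ))^(ℓ-1)
  | 0 => by
      rw [N_zero]
      rw [show W 0 = 1 from rfl]
      norm_num
  | (m+1) => by
      rw [N_succ]
      rw [div_le_iff₀ (by positivity)]
      have hterm : ∀ k ∈ Finset.Icc 1 (m+1), (g ℓ k : ℚ) * N ℓ (m + 1 - k)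
          ≤ ((k:ℚ)^2 * 3^(m+1-k)) * ((W (m+1) : ℚ))^(ℓ-1) := by
        intro k hk
        obtain ⟨hk1, hk2⟩ := Finset.mem_Icc.mp hk
        have hg : (g ℓ k : ℚ) ≤ (k:ℚ)^(ℓ+1) := by
          exact_mod_cast Nat.cast_le.mpr (g_le ℓ k (by omega))
        have hN : N ℓ (m+1-k) ≤ (3:ℚ)^(m+1-k) * ((W (m+1-k) : ℚ))^(ℓ-1) :=
          N_upper ℓ hℓ (m+1-k)
        have h1 : (g ℓ k : ℚ) * N ℓ (m + 1 - k)
            ≤ (k:ℚ)^(ℓ+1) * ((3:ℚ)^(m+1-k) * ((W (m+1-k) : ℚ))^(ℓ-1)) := by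
          apply mul_le_mul hg hN (N_nonneg ℓ _) (by positivity)
        refine h1.trans ?_
        have hsplit : (k:ℚ)^(ℓ+1) = (k:ℚ)^2 * (k:ℚ)^(ℓ-1) := by
          rw [← pow_add]
          congr 1
          omega
        rw [hsplit]
        have hWW : (k:ℚ)^(ℓ-1) * ((W (m+1-k) : ℚ))^(ℓ-1) ≤ ((W (m+1) : ℚ))^(ℓ-1) := by
          rw [← mul_pow]
          apply pow_le_pow_left₀ (by positivity)
          have hn : (k : ℕ) * W (m+1-k) ≤ W (m+1) := by
            calc k * W (m+1-k) ≤ W k * W (m+1-k) := Nat.mul_le_mul_right _ (le_W k hk1)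
              _ ≤ W (k + (m+1-k)) := W_superadd k (m+1-k)
              _ = W (m+1) := by congr 1; omega
          exact_mod_cast Nat.cast_le.mpr hn
        calc (k:ℚ)^2 * (k:ℚ)^(ℓ-1) * ((3:ℚ)^(m+1-k) * ((W (m+1-k):ℚ))^(ℓ-1))
            = ((k:ℚ)^2 * 3^(m+1-k)) * ((k:ℚ)^(ℓ-1) * ((W (m+1-k):ℚ))^(ℓ-1)) := by ring
          _ ≤ ((k:ℚ)^2 * 3^(m+1-k)) * ((W (m+1) : ℚ))^(ℓ-1) := by
              apply mul_le_mul_of_nonneg_left hWW (by positivity)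
      calc (∑ k ∈ Finset.Icc 1 (m+1), (g ℓ k : ℚ) * N ℓ (m + 1 - k))
          ≤ ∑ k ∈ Finset.Icc 1 (m+1), ((k:ℚ)^2 * 3^(m+1-k)) * ((W (m+1) : ℚ))^(ℓ-1) :=
            Finset.sum_le_sum hterm
        _ = (∑ k ∈ Finset.Icc 1 (m+1), (k:ℚ)^2 * 3^(m+1-k)) * ((W (m+1) : ℚ))^(ℓ-1) := by
            rw [Finset.sum_mul]
        _ ≤ ((m+1 : ℚ) * 3^(m+1)) * ((W (m+1) : ℚ))^(ℓ-1) := by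
            apply mul_le_mul_of_nonneg_right _ (by positivity)
            exact_mod_cast sum_sq_pow_le (m+1) (by omega)
        _ = 3 ^ (m + 1) * (W (m+1) : ℚ) ^ (ℓ - 1) * (↑m + 1) := by push_cast; ring

theorem N_lower (ℓ : ℕ) : ∀ a : ℕ, ((g ℓ 3 : ℚ))^a / (3^a * (a.factorial : ℚ)) ≤ N ℓ (3*a)
  | 0 => by
      rw [show 3*0 = 0 by rfl, N_zero]
      norm_num
  | (a+1) => by
      have ih := N_lower ℓ a
      have key : N ℓ (3*(a+1)) = (∑ k ∈ Finset.Icc 1 (3*a+3), (g ℓ k : ℚ) * N ℓ (3*a + 3 - k))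
          / ((3*a+3 : ℕ) : ℚ) := by
        rw [show 3*(a+1) = (3*a+2)+1 by ring, N_succ,
          show 3*a+2+1 = 3*a+3 from by omega]
        push_cast
        ring
      have hmem : 3 ∈ Finset.Icc 1 (3*a+3) := by
        rw [Finset.mem_Icc]; omega
      have hsingle : (g ℓ 3 : ℚ) * N ℓ (3*a) ≤
          ∑ k ∈ Finset.Icc 1 (3*a+3), (g ℓ k : ℚ) * N ℓ (3*a + 3 - k) := by
        have h0 := Finset.single_le_sum (f := fun k => (g ℓ k : ℚ) * N ℓ (3*a + 3 - k))
          (fun k _ => mul_nonneg (by positivity) (N_nonneg ℓ _)) hmem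
        have e : 3*a+3-3 = 3*a := by omega
        simpa [e] using h0
      rw [key, le_div_iff₀ (by positivity)]
      have heq : ((g ℓ 3:ℚ))^(a+1) / (3^(a+1) * (((a+1).factorial : ℕ) : ℚ)) * ((3*a+3 : ℕ):ℚ)
          = (g ℓ 3:ℚ) * ((g ℓ 3:ℚ)^a / (3^a * ((a.factorial : ℕ):ℚ))) := by
        rw [Nat.factorial_succ]
        have hfa : (0:ℚ) < (a.factorial : ℚ) := by
          exact_mod_cast Nat.factorial_pos a
        push_cast
        field_simp
        ring
      rw [heq]
      calc (g ℓ 3:ℚ) * ((g ℓ 3:ℚ)^a / (3^a * ((a.factorial : ℕ):ℚ)))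
          ≤ (g ℓ 3:ℚ) * N ℓ (3*a) := by
            apply mul_le_mul_of_nonneg_left ih (by positivity)
        _ ≤ _ := hsingle



section Partitions
variable {m : ℕ}

def partOnes (m : ℕ) : Nat.Partition m :=
  ⟨Multiset.replicate m 1, by
    intro i hi
    rw [Multiset.eq_of_mem_replicate hi]
    norm_num, by simp⟩

def partSingle (m : ℕ) (hm : 1 ≤ m) : Nat.Partition m :=
  ⟨{m}, by
    intro i hi
    rw [Multiset.mem_singleton.mp hi]
    omega, by simp⟩

def partC (m : ℕ) (hm : 2 ≤ m) : Nat.Partition m :=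
  ⟨(m-1) ::ₘ {1}, by
    intro i hi
    rcases Multiset.mem_cons.mp hi with h | h
    · omega
    · rw [Multiset.mem_singleton.mp h]; norm_num, by
    simp; omega⟩

def partD (m : ℕ) (hm : 4 ≤ m) : Nat.Partition m :=
  ⟨(m-2) ::ₘ {2}, by
    intro i hi
    rcases Multiset.mem_cons.mp hi with h | h
    · omega
    · rw [Multiset.mem_singleton.mp h]; norm_num, by
    simp; omega⟩

def partE (m : ℕ) (hm : 4 ≤ m) : Nat.Partition m :=
  ⟨(m-2) ::ₘ 1 ::ₘ {1}, by
    intro i hi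
    rcases Multiset.mem_cons.mp hi with h | h
    · omega
    · rcases Multiset.mem_cons.mp h with h | h
      · omega
      · rw [Multiset.mem_singleton.mp h]; norm_num, by
    simp; omega⟩

theorem p_ge_two (hm : 2 ≤ m) : 2 ≤ p m := by
  rw [p]
  have h := Fintype.one_lt_card_iff.mpr
    ⟨partSingle m (by omega), partOnes m, by
      intro h
      have hp := congrArg (fun q => Multiset.card q.parts) h
      simp [partSingle, partOnes] at hp
      omega⟩
  omega

theorem p_ge_five (hm : 4 ≤ m) : 5 ≤ p m := by
  have h4 : 4 ≤ m := hm
  have h2 : 2 ≤ m := by omega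
  have h1 : 1 ≤ m := by omega
  have hinj : Function.Injective
      (![partSingle m h1, partOnes m, partC m h2, partD m h4, partE m h4] : Fin 5 → Nat.Partition m) := by
    intro i j h
    fin_cases i <;> fin_cases j <;>
      first
      | rfl
      | (exfalso
         simp only [Matrix.cons_val_zero, Matrix.cons_val_one, Matrix.head_cons,
           Matrix.cons_val_two, Matrix.tail_cons, Matrix.cons_val_three,
           Matrix.cons_val_four] at h
         have hp1 := congrArg (fun q => Multiset.card q.parts) h
         have hp2 := congrArg (fun q => Multiset.count 1 q.parts) h
         simp [partSingle, partOnes, partC, partD, partE, Multiset.count_cons,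
           Multiset.count_singleton, Multiset.count_replicate] at hp1 hp2
         all_goals first
           | omega
           | (split_ifs at hp2 <;> omega))
  have := Fintype.card_le_of_injective _ hinj
  simpa [p] using this

end Partitions


theorem nine_mul_le_pow : ∀ a : ℕ, 1 ≤ a → 9*a ≤ 9^a
  | 0, h => by omega
  | 1, _ => by norm_num
  | (a+2), _ => by
      have ih := nine_mul_le_pow (a+1) (by omega)
      have h2 : 9^(a+2) = 9 * 9^(a+1) := by ring
      omega

theorem le_two_pow_pred (A : ℕ) (hA : 1 ≤ A) : A ≤ 2^(A-1) := by
  have := Nat.lt_two_pow_self (n := A-1)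
  omega

theorem key_nat (a A F e : ℕ) (ha : 1 ≤ a) (hA : 1 ≤ A)
    (hF : 10 * A * 9^a ≤ F) (he : 8*(F-1) ≤ e) :
    A * 3^(8*a) * 2^(3*e) < 3^(2*e) := by
  set t := F - 1 with ht
  have h9a : 9*a ≤ 9^a := nine_mul_le_pow a ha
  have htF : 10*A*9^a - 1 ≤ t := by omega
  -- A - 1 + 13a < t
  have haA : A - 1 + 13*a < t := by
    have h1 : A ≤ a*A := Nat.le_mul_of_pos_left A (by omega)
    have h2 : 13*a ≤ 13*(a*A) := by
      have : a ≤ a * A := Nat.le_mul_of_pos_right a (by omega)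
      omega
    have h3 : 1 ≤ a*A := by omega
    have h4 : 90*(a*A) ≤ 10*A*9^a := by
      calc 90*(a*A) = 10*(9*a)*A := by ring
        _ ≤ 10*(9^a)*A := by
            apply Nat.mul_le_mul_right
            apply Nat.mul_le_mul_left
            exact h9a
        _ = 10*A*9^a := by ring
    omega
  have hstep5 : A * 3^(8*a) < 2^t := by
    have h1 : A ≤ 2^(A-1) := le_two_pow_pred A hA
    have h2 : 3^(8*a) ≤ 2^(13*a) := by
      calc 3^(8*a) = (3^8)^a := by rw [← pow_mul]
        _ ≤ (2^13)^a := Nat.pow_le_pow_left (by norm_num) a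
        _ = 2^(13*a) := by rw [← pow_mul]
    calc A * 3^(8*a) ≤ 2^(A-1) * 2^(13*a) := Nat.mul_le_mul h1 h2
      _ = 2^(A-1+13*a) := by rw [← pow_add]
      _ < 2^t := Nat.pow_lt_pow_right (by norm_num) haA
  have hstep3 : A * 3^(8*a) * 2^(24*t) < 3^(16*t) := by
    have hbase : 5*2^24 ≤ 2*3^16 := by norm_num
    have hb : 5^t * 2^(24*t) ≤ 2^t * 3^(16*t) := by
      calc 5^t * 2^(24*t) = (5*2^24)^t := by rw [mul_pow, ← pow_mul]
        _ ≤ (2*3^16)^t := Nat.pow_le_pow_left hbase t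
        _ = 2^t * 3^(16*t) := by rw [mul_pow, ← pow_mul]
    have h4t : A * 3^(8*a) * 2^t < 4^t := by
      calc A * 3^(8*a) * 2^t < 2^t * 2^t :=
            mul_lt_mul_of_pos_right hstep5 (Nat.pow_pos (by norm_num))
        _ = 4^t := by rw [← mul_pow]; norm_num
    have h5t : A * 3^(8*a) * 2^t < 5^t :=
      h4t.trans_le (Nat.pow_le_pow_left (by norm_num) t)
    have hchain : (A * 3^(8*a) * 2^(24*t)) * 2^t < 3^(16*t) * 2^t := by
      calc (A * 3^(8*a) * 2^(24*t))*2^t = (A * 3^(8*a) * 2^t) * 2^(24*t) := by ring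
        _ < 5^t * 2^(24*t) := mul_lt_mul_of_pos_right h5t (Nat.pow_pos (by norm_num))
        _ ≤ 2^t * 3^(16*t) := hb
        _ = 3^(16*t) * 2^t := by ring
    exact Nat.lt_of_mul_lt_mul_right hchain
  -- now extend to e ≥ 8 t
  have he8 : 8*t ≤ e := by omega
  set u := e - 8*t with hu
  have h3e : 3*e = 24*t + 3*u := by omega
  have h2e : 2*e = 16*t + 2*u := by omega
  have h89 : 2^(3*u) ≤ 3^(2*u) := by
    calc 2^(3*u) = (2^3)^u := by rw [← pow_mul]
      _ ≤ (3^2)^u := Nat.pow_le_pow_left (by norm_num) u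
      _ = 3^(2*u) := by rw [← pow_mul]
  calc A * 3^(8*a) * 2^(3*e) = (A * 3^(8*a) * 2^(24*t)) * 2^(3*u) := by
        rw [h3e, pow_add]; ring
    _ < 3^(16*t) * 2^(3*u) :=
        mul_lt_mul_of_pos_right hstep3 (Nat.pow_pos (by norm_num))
    _ ≤ 3^(16*t) * 3^(2*u) := Nat.mul_le_mul_left _ h89
    _ = 3^(2*e) := by rw [h2e, pow_add]

theorem final_nat (b e f F : ℕ) (hf : 1 ≤ f)
    (hF : 10 * f^2 * 9^(b+1) ≤ F) (he : 8*(F-1) ≤ e) :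
    3^(3*b+2) * (2*3^b)^e * (3^(3*b+4) * (2*(2*3^b))^e) * (3^(b+1) * f)^2
      < (3^(e*(b+1)))^2 := by
  have hkey : f^2 * 3^(8*(b+1)) * 2^(3*e) < 3^(2*e) :=
    key_nat (b+1) (f^2) F e (by omega) (Nat.one_le_pow _ _ (by omega)) hF he
  have h3 : 0 < 3^(2*(b*e)) := Nat.pow_pos (by norm_num)
  have h24 : (2:ℕ)^e * 4^e = 2^(3*e) := by
    rw [show (4:ℕ) = 2^2 by norm_num, ← pow_mul, ← pow_add]
    congr 1
    omega
  have hkey' : f^2 * 3^(8*(b+1)) * (2^e * 4^e) < 3^(2*e) := by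
    rw [h24]; exact hkey
  calc 3^(3*b+2) * (2*3^b)^e * (3^(3*b+4) * (2*(2*3^b))^e) * (3^(b+1) * f)^2
      = (f^2 * 3^(8*(b+1)) * (2^e * 4^e)) * 3^(2*(b*e)) := by ring
    _ < 3^(2*e) * 3^(2*(b*e)) := mul_lt_mul_of_pos_right hkey' h3
    _ = (3^(e*(b+1)))^2 := by ring


theorem log_concave_mod_zero (ℓ n : ℕ) (hn : n % 3 = 0) (hn3 : 3 ≤ n)
    (hℓ : 1 + 8 * (((n / 3).factorial ^ 2 * p (n - 1) * p (n + 1) * 3 ^ (2 * (n / 3))) - 1)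
        ≤ ℓ) :
    N ℓ (n - 1) * N ℓ (n + 1) < N ℓ n ^ 2 := by
  classical
  set a := n / 3 with ha_def
  have hna : n = 3 * a := by omega
  have ha1 : 1 ≤ a := by omega
  obtain ⟨b, hb⟩ : ∃ b, a = b + 1 := ⟨a - 1, by omega⟩
  set F := (a.factorial ^ 2 * p (n - 1) * p (n + 1) * 3 ^ (2 * a)) with hF_def
  have hp1 : 2 ≤ p (n - 1) := p_ge_two (by omega)
  have hp2 : 5 ≤ p (n + 1) := p_ge_five (by omega)
  have hfac1 : 1 ≤ a.factorial := Nat.factorial_pos a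
  have hF10 : 10 * a.factorial ^ 2 * 9 ^ a ≤ F := by
    have h9 : (9:ℕ) ^ a = 3 ^ (2 * a) := by
      rw [show (9:ℕ) = 3^2 by norm_num, ← pow_mul]
    rw [hF_def, ← h9]
    calc 10 * a.factorial ^ 2 * 9 ^ a = a.factorial ^ 2 * 10 * 9 ^ a := by ring
      _ ≤ a.factorial ^ 2 * (p (n-1) * p (n+1)) * 9 ^ a := by
          apply Nat.mul_le_mul_right
          apply Nat.mul_le_mul_left
          calc 10 = 2 * 5 := by norm_num
            _ ≤ p (n-1) * p (n+1) := Nat.mul_le_mul hp1 hp2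
      _ = a.factorial ^ 2 * p (n-1) * p (n+1) * 9 ^ a := by ring
  obtain ⟨e, rfl⟩ : ∃ e, ℓ = e + 1 := ⟨ℓ - 1, by omega⟩
  have hℓe : (e + 1) - 1 = e := by omega
  have he : 8 * (F - 1) ≤ e := by omega
  -- values of W at n ± 1
  have hW1 : W (n - 1) = 2 * 3 ^ b := by
    have h : n - 1 = 3 * b + 2 := by omega
    rw [h, W_val_2mod3]
  have hW2 : W (n + 1) = 2 * (2 * 3 ^ b) := by
    have h : n + 1 = 3 * b + 4 := by omega
    rw [h, W_val_1mod3]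
    ring
  -- upper bound for the product
  have hU : N (e+1) (n-1) * N (e+1) (n+1)
      ≤ ((3 ^ (n-1) * W (n-1) ^ e * (3 ^ (n+1) * W (n+1) ^ e) : ℕ) : ℚ) := by
    have h1 := N_upper (e+1) (by omega) (n-1)
    have h2 := N_upper (e+1) (by omega) (n+1)
    rw [hℓe] at h1 h2
    push_cast
    calc N (e+1) (n-1) * N (e+1) (n+1)
        ≤ ((3:ℚ)^(n-1) * ((W (n-1) : ℚ))^e) * ((3:ℚ)^(n+1) * ((W (n+1) : ℚ))^e) :=
          mul_le_mul h1 h2 (N_nonneg _ _) (by positivity)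
      _ = (3:ℚ)^(n-1) * ((W (n-1):ℚ))^e * ((3:ℚ)^(n+1) * ((W (n+1):ℚ))^e) := by ring
  -- lower bound for N n
  have hg3 : (3:ℕ) ^ e ≤ g (e+1) 3 := g_lower e
  have hY : (0:ℚ) < ((3 ^ a * a.factorial : ℕ) : ℚ) := by positivity
  have hL : (((3 ^ (e * a) : ℕ) : ℚ)) / (((3 ^ a * a.factorial : ℕ) : ℚ)) ≤ N (e+1) n := by
    have h0 := N_lower (e+1) a
    rw [← hna] at h0
    refine le_trans ?_ h0
    rw [div_le_div_iff₀ hY (by positivity)]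
    have hnum : (((3 ^ (e * a) : ℕ) : ℚ)) ≤ ((g (e+1) 3 : ℚ))^a := by
      push_cast
      rw [pow_mul]
      apply pow_le_pow_left₀ (by positivity)
      exact_mod_cast hg3
    calc (((3 ^ (e * a) : ℕ) : ℚ)) * (3 ^ a * (a.factorial : ℚ))
        ≤ ((g (e+1) 3 : ℚ))^a * (3 ^ a * (a.factorial : ℚ)) := by
          apply mul_le_mul_of_nonneg_right hnum (by positivity)
      _ = ((g (e+1) 3 : ℚ))^a * (((3 ^ a * a.factorial : ℕ) : ℚ)) := by push_cast; ring
  have hL2 : ((((3 ^ (e * a) : ℕ) : ℚ)) / (((3 ^ a * a.factorial : ℕ) : ℚ)))^2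
      ≤ N (e+1) n ^ 2 := by
    apply pow_le_pow_left₀ (by positivity) hL
  -- the key strict numeric inequality, in ℕ
  have hF10b : 10 * (b+1).factorial ^ 2 * 9 ^ (b+1) ≤ F := by rw [← hb]; exact hF10
  have hNat : (3 ^ (n-1) * W (n-1) ^ e * (3 ^ (n+1) * W (n+1) ^ e)) *
      (3 ^ a * a.factorial)^2 < (3 ^ (e * a))^2 := by
    rw [hW1, hW2, show n - 1 = 3*b+2 from by omega, show n + 1 = 3*b+4 from by omega, hb]
    exact final_nat b e (b+1).factorial F (by rw [← hb]; exact hfac1) hF10b he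
  have hQ : ((3 ^ (n-1) * W (n-1) ^ e * (3 ^ (n+1) * W (n+1) ^ e) : ℕ) : ℚ)
      < ((((3 ^ (e * a) : ℕ) : ℚ)) / (((3 ^ a * a.factorial : ℕ) : ℚ)))^2 := by
    rw [div_pow, lt_div_iff₀ (by positivity)]
    exact_mod_cast hNat
  calc N (e+1) (n-1) * N (e+1) (n+1)
      ≤ ((3 ^ (n-1) * W (n-1) ^ e * (3 ^ (n+1) * W (n+1) ^ e) : ℕ) : ℚ) := hU
    _ < ((((3 ^ (e * a) : ℕ) : ℚ)) / (((3 ^ a * a.factorial : ℕ) : ℚ)))^2 := hQ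
    _ ≤ N (e+1) n ^ 2 := hL2
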